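/- arXiv:0906.1541 — 3 statements merged into one kernel-verified Lean document; each statement's English description precedes it below -/
import Mathlib

section
/- Let d ≥ 1, let ψ : [1,∞) → (0,∞) be a decreasing function with ψ(T) → 0 as T → ∞, and assume that for every λ ≥ 1 there exists c > 0 with ψ(λT) ≥ c·ψ(T) for all T ≥ 1. Let w = (w_1,…,w_d) ∈ ℝ^d and set w* = (1,w_1,…,w_d) ∈ ℝ^{d+1}. Then the following are equivalent: (i) inf over nonzero x ∈ ℤ^{d+1} of (1/ψ(|x|_∞)) · inf_{t∈ℝ} |x − t·w*|_∞ > 0; (ii) there exists γ > 0 such that max_{1≤j≤d} ‖q·w_j‖ ≥ γ·ψ(|q|) for every nonzero integer q, where ‖·‖ denotes the distance to the nearest integer. -/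
/-!
Write `W = ‖w‖`. For `q ≠ 0` the lattice point `x = (q, round (q w))` lies within
`max_j ‖q w_j‖` of the line `ℝ (1, w)` (take `t = q`) and has `|x| ≤ (1 + W) |q|`; the
scaling condition on `ψ` absorbs the factor `1 + W`, so (i) gives (ii). Conversely, for
`x = (q, p)` and every `t`, `|p_j - q w_j| ≤ (1 + W) |x - t (1, w)|`: when `q ≠ 0` this bounds
`‖q w_j‖`, and when `q = 0` some `p_j ≠ 0` forces the distance to be at least `1 / (1 + W)`.
-/

/-- The lift `w ↦ (1, w)` from `ℝ^d` to `ℝ^{d+1}`. -/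
noncomputable def lift1 {d : ℕ} (w : Fin d → ℝ) : Fin (d+1) → ℝ := Fin.cons 1 w

/-- Distance from a real number to the nearest integer. -/
noncomputable def nint (t : ℝ) : ℝ := ⨅ n : ℤ, |t - (n : ℝ)|

lemma nint_eq_abs_sub_round (t : ℝ) : nint t = |t - round t| :=
  le_antisymm (ciInf_le ⟨0, Set.forall_mem_range.2 fun _ => abs_nonneg _⟩ (round t))
    (le_ciInf fun n => round_le t n)

lemma nint_nonneg (t : ℝ) : 0 ≤ nint t := by
  rw [nint_eq_abs_sub_round]
  exact abs_nonneg _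

lemma nint_le_abs_sub_intCast (t : ℝ) (n : ℤ) : nint t ≤ |t - n| := by
  rw [nint_eq_abs_sub_round]
  exact round_le t n

lemma one_le_norm_intCast_of_ne_zero {ι : Type*} [Fintype ι] {x : ι → ℤ} (hx : x ≠ 0) :
    1 ≤ ‖fun i => (x i : ℝ)‖ := by
  obtain ⟨i, hi⟩ := Function.ne_iff.mp hx
  calc (1 : ℝ) ≤ |(x i : ℝ)| := by exact_mod_cast Int.one_le_abs hi
    _ ≤ ‖fun i => (x i : ℝ)‖ := norm_le_pi_norm (fun i => (x i : ℝ)) i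

section Line

variable {d : ℕ} (w : Fin d → ℝ)

lemma abs_sub_le_norm_sub_smul_lift1 (X : Fin (d+1) → ℝ) (t : ℝ) :
    |X 0 - t| ≤ ‖X - t • lift1 w‖ := by
  simpa [lift1] using norm_le_pi_norm (X - t • lift1 w) 0

lemma abs_succ_sub_mul_le_norm_sub_smul_lift1 (X : Fin (d+1) → ℝ) (t : ℝ) (j : Fin d) :
    |X j.succ - t * w j| ≤ ‖X - t • lift1 w‖ := by
  simpa [lift1] using norm_le_pi_norm (X - t • lift1 w) j.succ

lemma abs_succ_sub_mul_zero_le_norm_sub_smul_lift1 (X : Fin (d+1) → ℝ) (t : ℝ) (j : Fin d) :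
    |X j.succ - X 0 * w j| ≤ (1 + ‖w‖) * ‖X - t • lift1 w‖ := by
  have hw : |w j| ≤ ‖w‖ := norm_le_pi_norm w j
  calc |X j.succ - X 0 * w j| = |(X j.succ - t * w j) - (X 0 - t) * w j| := by ring_nf
    _ ≤ |X j.succ - t * w j| + |X 0 - t| * |w j| := by rw [← abs_mul]; exact abs_sub _ _
    _ ≤ ‖X - t • lift1 w‖ + ‖X - t • lift1 w‖ * ‖w‖ :=
        add_le_add (abs_succ_sub_mul_le_norm_sub_smul_lift1 w X t j)
          (mul_le_mul (abs_sub_le_norm_sub_smul_lift1 w X t) hw (abs_nonneg _) (norm_nonneg _))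
    _ = (1 + ‖w‖) * ‖X - t • lift1 w‖ := by ring

lemma iSup_nint_le_norm_sub_smul_lift1 (x : Fin (d+1) → ℤ) (t : ℝ) :
    ⨆ j, nint ((x 0 : ℝ) * w j) ≤ (1 + ‖w‖) * ‖(fun i => (x i : ℝ)) - t • lift1 w‖ := by
  refine Real.iSup_le (fun j => (nint_le_abs_sub_intCast _ (x j.succ)).trans ?_) (by positivity)
  rw [abs_sub_comm]
  exact abs_succ_sub_mul_zero_le_norm_sub_smul_lift1 w (fun i => (x i : ℝ)) t j

lemma one_le_norm_sub_smul_lift1 {x : Fin (d+1) → ℤ} (hx : x ≠ 0) (h0 : x 0 = 0) (t : ℝ) :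
    1 ≤ (1 + ‖w‖) * ‖(fun i => (x i : ℝ)) - t • lift1 w‖ := by
  obtain ⟨i, hi⟩ := Function.ne_iff.mp hx
  obtain ⟨j, rfl⟩ := Fin.exists_succ_eq.mpr (fun h : i = 0 => hi (h ▸ h0))
  calc (1 : ℝ) ≤ |(x j.succ : ℝ)| := by exact_mod_cast Int.one_le_abs hi
    _ = |(x j.succ : ℝ) - (x 0 : ℝ) * w j| := by simp [h0]
    _ ≤ _ := abs_succ_sub_mul_zero_le_norm_sub_smul_lift1 w (fun i => (x i : ℝ)) t j

noncomputable def roundLift (q : ℤ) : Fin (d+1) → ℤ := Fin.cons q fun j => round (q * w j)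

lemma roundLift_ne_zero {q : ℤ} (hq : q ≠ 0) : roundLift w q ≠ 0 :=
  fun h => hq (congrFun h 0)

lemma norm_roundLift_le {q : ℤ} (hq : q ≠ 0) :
    ‖fun i => (roundLift w q i : ℝ)‖ ≤ (1 + ‖w‖) * |(q : ℝ)| := by
  have hq1 : (1 : ℝ) ≤ |(q : ℝ)| := by exact_mod_cast Int.one_le_abs hq
  refine (pi_norm_le_iff_of_nonneg (by positivity)).2 (Fin.cases ?_ fun j => ?_)
  · simp only [roundLift, Fin.cons_zero, Real.norm_eq_abs]
    nlinarith [norm_nonneg w]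
  · have hround : |(round ((q : ℝ) * w j) : ℝ) - q * w j| ≤ 1 / 2 := by
      rw [abs_sub_comm]; exact abs_sub_round _
    have hqw : |(q : ℝ) * w j| ≤ |(q : ℝ)| * ‖w‖ := by
      rw [abs_mul]; exact mul_le_mul_of_nonneg_left (norm_le_pi_norm w j) (abs_nonneg _)
    have htri := abs_sub_abs_le_abs_sub (round ((q : ℝ) * w j) : ℝ) (q * w j)
    simp only [roundLift, Fin.cons_succ, Real.norm_eq_abs]
    nlinarith

lemma norm_roundLift_sub_smul_lift1_le (q : ℤ) :
    ‖(fun i => (roundLift w q i : ℝ)) - (q : ℝ) • lift1 w‖ ≤ ⨆ j, nint (q * w j) := by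
  have hS : 0 ≤ ⨆ j, nint (q * w j) := Real.iSup_nonneg fun j => nint_nonneg _
  refine (pi_norm_le_iff_of_nonneg hS).2 (Fin.cases ?_ fun j => ?_)
  · simpa [roundLift, lift1] using hS
  · calc ‖((fun i => (roundLift w q i : ℝ)) - (q : ℝ) • lift1 w) j.succ‖
        = nint (q * w j) := by
          simp [roundLift, lift1, nint_eq_abs_sub_round, abs_sub_comm]
      _ ≤ ⨆ j, nint (q * w j) := le_ciSup (Set.finite_range fun j => nint (q * w j)).bddAbove j

variable (ψ : ℝ → ℝ)

def LineBadlyApproximable : Prop :=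
  ∃ γ > (0:ℝ), ∀ x : Fin (d+1) → ℤ, x ≠ 0 →
    γ * ψ ‖(fun i => (x i : ℝ))‖ ≤ ⨅ t : ℝ, ‖(fun i => (x i : ℝ)) - t • lift1 w‖

def BadlyApproximable : Prop :=
  ∃ γ > (0:ℝ), ∀ q : ℤ, q ≠ 0 → γ * ψ (|q| : ℤ) ≤ ⨆ j : Fin d, nint ((q : ℝ) * w j)

variable {w ψ}

theorem LineBadlyApproximable.badlyApproximable (hψanti : AntitoneOn ψ (Set.Ici 1))
    (hψscale : ∃ c > (0:ℝ), ∀ T, 1 ≤ T → c * ψ T ≤ ψ ((1 + ‖w‖) * T))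
    (h : LineBadlyApproximable w ψ) : BadlyApproximable w ψ := by
  obtain ⟨γ, hγ, H⟩ := h
  obtain ⟨c, hc, hcψ⟩ := hψscale
  refine ⟨γ * c, by positivity, fun q hq => ?_⟩
  have hq1 : (1 : ℝ) ≤ |(q : ℝ)| := by exact_mod_cast Int.one_le_abs hq
  have hx1 := one_le_norm_intCast_of_ne_zero (roundLift_ne_zero w hq)
  have hxq := norm_roundLift_le w hq
  calc γ * c * ψ ((|q| : ℤ) : ℝ) ≤ γ * ψ ((1 + ‖w‖) * |(q : ℝ)|) := by
        rw [Int.cast_abs, mul_assoc]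
        exact mul_le_mul_of_nonneg_left (hcψ _ hq1) hγ.le
    _ ≤ γ * ψ ‖fun i => (roundLift w q i : ℝ)‖ :=
        mul_le_mul_of_nonneg_left (hψanti hx1 (hx1.trans hxq) hxq) hγ.le
    _ ≤ ⨅ t : ℝ, ‖(fun i => (roundLift w q i : ℝ)) - t • lift1 w‖ :=
        H _ (roundLift_ne_zero w hq)
    _ ≤ ‖(fun i => (roundLift w q i : ℝ)) - (q : ℝ) • lift1 w‖ :=
        ciInf_le ⟨0, Set.forall_mem_range.2 fun _ => norm_nonneg _⟩ _
    _ ≤ ⨆ j, nint (q * w j) := norm_roundLift_sub_smul_lift1_le w q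

theorem BadlyApproximable.lineBadlyApproximable (hψpos : ∀ T, 1 ≤ T → 0 < ψ T)
    (hψanti : AntitoneOn ψ (Set.Ici 1)) (h : BadlyApproximable w ψ) :
    LineBadlyApproximable w ψ := by
  obtain ⟨γ, hγ, H⟩ := h
  have hψ1 : 0 < ψ 1 := hψpos 1 le_rfl
  refine ⟨min γ (ψ 1)⁻¹ / (1 + ‖w‖), by positivity, fun x hx => le_ciInf fun t => ?_⟩
  set X : Fin (d+1) → ℝ := fun i => x i
  have hX1 : 1 ≤ ‖X‖ := one_le_norm_intCast_of_ne_zero hx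
  have hψX : 0 ≤ ψ ‖X‖ := (hψpos _ hX1).le
  suffices min γ (ψ 1)⁻¹ * ψ ‖X‖ ≤ (1 + ‖w‖) * ‖X - t • lift1 w‖ by
    rw [div_mul_eq_mul_div, div_le_iff₀ (by positivity)]
    linarith
  by_cases h0 : x 0 = 0
  · calc min γ (ψ 1)⁻¹ * ψ ‖X‖ ≤ (ψ 1)⁻¹ * ψ 1 :=
          mul_le_mul (min_le_right _ _) (hψanti Set.self_mem_Ici hX1 hX1) hψX (by positivity)
      _ = 1 := inv_mul_cancel₀ hψ1.ne'
      _ ≤ _ := one_le_norm_sub_smul_lift1 w hx h0 t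
  · have hq1 : (1 : ℝ) ≤ |(x 0 : ℝ)| := by exact_mod_cast Int.one_le_abs h0
    calc min γ (ψ 1)⁻¹ * ψ ‖X‖ ≤ γ * ψ |(x 0 : ℝ)| :=
          mul_le_mul (min_le_left _ _) (hψanti hq1 hX1 (norm_le_pi_norm X 0)) hψX hγ.le
      _ ≤ ⨆ j, nint (x 0 * w j) := by simpa using H (x 0) h0
      _ ≤ _ := iSup_nint_le_norm_sub_smul_lift1 w x t

end Line

theorem badly_approximable_equivalence_general
    (d : ℕ)
    (ψ : ℝ → ℝ)
    (hψpos : ∀ T, 1 ≤ T → 0 < ψ T)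
    (hψanti : ∀ T₁ T₂, 1 ≤ T₁ → T₁ ≤ T₂ → ψ T₂ ≤ ψ T₁)
    -- `ψ` decays at most polynomially: for every `λ ≥ 1` there is `c > 0` with `ψ(λT) ≥ c ψ(T)`
    (hψscale : ∀ l : ℝ, 1 ≤ l → ∃ c > (0:ℝ), ∀ T, 1 ≤ T → c * ψ T ≤ ψ (l * T))
    (w : Fin d → ℝ) :
    -- (i) the point `(1,w)` is `ψ`-badly approximable in the distance-to-line sense
    (∃ γ > (0:ℝ), ∀ x : Fin (d+1) → ℤ, x ≠ 0 →
      γ * ψ ‖(fun i => (x i : ℝ))‖ ≤ ⨅ t : ℝ, ‖(fun i => (x i : ℝ)) - t • lift1 w‖)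
    ↔
    -- (ii) `max_j ‖q w_j‖ ≥ γ ψ(|q|)` for all nonzero integers `q`
    (∃ γ > (0:ℝ), ∀ q : ℤ, q ≠ 0 →
      γ * ψ (|q| : ℤ) ≤ ⨆ j : Fin d, nint ((q : ℝ) * w j)) := by
  have hanti : AntitoneOn ψ (Set.Ici 1) := fun a ha b _ hab => hψanti a b ha hab
  exact ⟨fun h => LineBadlyApproximable.badlyApproximable hanti
      (hψscale _ (le_add_of_nonneg_right (norm_nonneg w))) h,
    fun h => BadlyApproximable.lineBadlyApproximable hψpos hanti h⟩

theorem badly_approximable_equivalence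
    (d : ℕ) (hd : 1 ≤ d)
    (ψ : ℝ → ℝ)
    (hψpos : ∀ T, 1 ≤ T → 0 < ψ T)
    (hψanti : ∀ T₁ T₂, 1 ≤ T₁ → T₁ ≤ T₂ → ψ T₂ ≤ ψ T₁)
    (hψ0 : Filter.Tendsto ψ Filter.atTop (nhds 0))
    -- `ψ` decays at most polynomially: for every `λ ≥ 1` there is `c > 0` with `ψ(λT) ≥ c ψ(T)`
    (hψscale : ∀ l : ℝ, 1 ≤ l → ∃ c > (0:ℝ), ∀ T, 1 ≤ T → c * ψ T ≤ ψ (l * T))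
    (w : Fin d → ℝ) :
    -- (i) the point `(1,w)` is `ψ`-badly approximable in the distance-to-line sense
    (∃ γ > (0:ℝ), ∀ x : Fin (d+1) → ℤ, x ≠ 0 →
      γ * ψ ‖(fun i => (x i : ℝ))‖ ≤ ⨅ t : ℝ, ‖(fun i => (x i : ℝ)) - t • lift1 w‖)
    ↔
    -- (ii) `max_j ‖q w_j‖ ≥ γ ψ(|q|)` for all nonzero integers `q`
    (∃ γ > (0:ℝ), ∀ q : ℤ, q ≠ 0 →
      γ * ψ (|q| : ℤ) ≤ ⨆ j : Fin d, nint ((q : ℝ) * w j)) :=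
  badly_approximable_equivalence_general d ψ hψpos hψanti hψscale w
end

section
/- Let d ≥ 1, R ≥ 1, γ > 0, and let ψ, φ : [1,∞) → (0,∞) be decreasing functions with φ(T) ≤ ψ(T) for all T ≥ 1. Let B ⊂ A be affine subspaces of ℝ^d with 0 ≤ b = dim B < a = dim A ≤ d. For a real T ≥ 1 define Ω_T = {z ∈ ℝ^{d+1} : 0 ≤ z_0 ≤ T, max_{1≤j≤d}|z_j| ≤ RT, dist_∞(z,𝔅) ≤ γ·ψ(RT)} and Π_T = {z ∈ ℝ^{d+1} : 0 ≤ z_0 ≤ T, max_{1≤j≤d}|z_j| ≤ RT, dist_∞(z,𝔄) ≤ φ(RT)}. Then there exists a constant C > 0, depending only on d, A, B, R and γ, such that for every T ≥ 1 the set Π_T can be covered by at most C·(T/ψ(RT))^{a−b} translates of (1/2)·Ω_T, i.e. there is a finite set S ⊂ ℝ^{d+1} with #S ≤ C·(T/ψ(RT))^{a−b} and Π_T ⊆ ⋃_{c ∈ S} ((1/2)·Ω_T + c). -/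
/-- The linear span of `{(1,w) : w ∈ B}` for an affine subspace `B ⊆ ℝ^d`. -/
noncomputable def spanLift {d : ℕ} (B : AffineSubspace ℝ (Fin d → ℝ)) :
    Submodule ℝ (Fin (d+1) → ℝ) :=
  Submodule.span ℝ (lift1 '' (B : Set (Fin d → ℝ)))

/-- The set `Ω_T`. -/
noncomputable def OmegaSet {d : ℕ} (B : AffineSubspace ℝ (Fin d → ℝ))
    (ψ : ℝ → ℝ) (R T γ : ℝ) : Set (Fin (d+1) → ℝ) :=
  {z | 0 ≤ z 0 ∧ z 0 ≤ T ∧ (∀ j : Fin d, |z j.succ| ≤ R * T) ∧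
    Metric.infDist z (spanLift B : Set (Fin (d+1) → ℝ)) ≤ γ * ψ (R * T)}

/-- The set `Π_T`. -/
noncomputable def PiSet {d : ℕ} (A : AffineSubspace ℝ (Fin d → ℝ))
    (φ : ℝ → ℝ) (R T : ℝ) : Set (Fin (d+1) → ℝ) :=
  {z | 0 ≤ z 0 ∧ z 0 ≤ T ∧ (∀ j : Fin d, |z j.succ| ≤ R * T) ∧
    Metric.infDist z (spanLift A : Set (Fin (d+1) → ℝ)) ≤ φ (R * T)}

/-! Pick `w₀ ∈ B`, so that `β₀ = (1, w₀) ∈ 𝔅`, and a complement `W` of `𝔅` inside `𝔄`; it has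
dimension `a - b`, and the projections of `𝔄` onto `𝔅` and `W` are bounded. A point of `Π_T` is
`v + w + e` with `v ∈ 𝔅`, `w ∈ W` of size `O(T)` and `|e| ≤ ψ(RT)`. Netting `v` at mesh `≍ T`
costs `O(1)` points, `w` at mesh `≍ ψ(RT)` costs `O((T/ψ(RT))^(a-b))` points, and `e` at the same
mesh again `O(1)` points. For a sum `c` of net points, `y - c` is `O(T)`-small along `𝔅` and within
`γψ(RT)/2` of `𝔅`; shifting `c` by a multiple of `β₀` of size `≍ T` makes the `0`-th coordinate
of `y - c` nonnegative, and then `2 (y - c) ∈ Ω_T`. -/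

open Metric Module Set
open scoped Pointwise

section Translates

variable {E : Type*} [AddCommGroup E]

def CoveredByTranslates (X Y : Set E) (N : ℝ) : Prop :=
  ∃ S : Finset E, (S.card : ℝ) ≤ N ∧ X ⊆ ⋃ c ∈ S, c +ᵥ Y

namespace CoveredByTranslates

variable {X X' Y Y' : Set E} {N N' : ℝ}

theorem mono (h : CoveredByTranslates X Y N) (hX : X' ⊆ X) (hY : Y ⊆ Y') (hN : N ≤ N') :
    CoveredByTranslates X' Y' N' := by
  obtain ⟨S, hS, hXS⟩ := h
  exact ⟨S, hS.trans hN, hX.trans <| hXS.trans <| iUnion₂_mono fun c _ => vadd_set_mono hY⟩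

theorem of_subset_vadd (h : CoveredByTranslates X Y N) (v : E) (hY : Y ⊆ v +ᵥ Y') :
    CoveredByTranslates X Y' N := by
  classical
  obtain ⟨S, hS, hXS⟩ := h
  refine ⟨S.image (· + v), le_trans (by exact_mod_cast Finset.card_image_le) hS, ?_⟩
  intro x hx
  obtain ⟨c, hc, y, hy, rfl⟩ := mem_iUnion₂.1 (hXS hx)
  obtain ⟨y', hy', rfl⟩ := hY hy
  refine mem_iUnion₂.2 ⟨c + v, Finset.mem_image_of_mem _ hc, y', hy', ?_⟩
  simp only [vadd_eq_add, add_assoc]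

theorem add {X₁ X₂ Y₁ Y₂ : Set E} {N₁ N₂ : ℝ} (h₁ : CoveredByTranslates X₁ Y₁ N₁)
    (h₂ : CoveredByTranslates X₂ Y₂ N₂) : CoveredByTranslates (X₁ + X₂) (Y₁ + Y₂) (N₁ * N₂) := by
  classical
  obtain ⟨S₁, hS₁, hXS₁⟩ := h₁
  obtain ⟨S₂, hS₂, hXS₂⟩ := h₂
  refine ⟨S₁ + S₂, ?_, ?_⟩
  · calc ((S₁ + S₂).card : ℝ) ≤ S₁.card * S₂.card := by exact_mod_cast Finset.card_add_le
      _ ≤ N₁ * N₂ := mul_le_mul hS₁ hS₂ (Nat.cast_nonneg _) ((Nat.cast_nonneg _).trans hS₁)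
  · rintro _ ⟨x₁, hx₁, x₂, hx₂, rfl⟩
    obtain ⟨c₁, hc₁, y₁, hy₁, rfl⟩ := mem_iUnion₂.1 (hXS₁ hx₁)
    obtain ⟨c₂, hc₂, y₂, hy₂, rfl⟩ := mem_iUnion₂.1 (hXS₂ hx₂)
    refine mem_iUnion₂.2 ⟨c₁ + c₂, Finset.add_mem_add hc₁ hc₂, y₁ + y₂, add_mem_add hy₁ hy₂, ?_⟩
    simp only [vadd_eq_add]
    abel

theorem pi {ι : Type*} [Fintype ι] [DecidableEq ι] {F : ι → Type*} [∀ i, AddCommGroup (F i)]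
    {X Y : ∀ i, Set (F i)} {N : ι → ℝ} (h : ∀ i, CoveredByTranslates (X i) (Y i) (N i)) :
    CoveredByTranslates (univ.pi X) (univ.pi Y) (∏ i, N i) := by
  choose S hS hXS using h
  refine ⟨Fintype.piFinset S, ?_, ?_⟩
  · rw [Fintype.card_piFinset, Nat.cast_prod]
    exact Finset.prod_le_prod (fun i _ => Nat.cast_nonneg _) fun i _ => hS i
  · intro x hx
    choose c hcS hxc using fun i => mem_iUnion₂.1 (hXS i (hx i (mem_univ i)))
    refine mem_iUnion₂.2 ⟨c, Fintype.mem_piFinset.2 hcS, ?_⟩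
    rw [mem_vadd_set_iff_neg_vadd_mem]
    intro i _
    simpa [mem_vadd_set_iff_neg_vadd_mem] using hxc i

end CoveredByTranslates

end Translates

theorem Real.coveredByTranslates_closedBall {r δ : ℝ} (hr : 0 ≤ r) (hδ : 0 < δ) :
    CoveredByTranslates (closedBall (0 : ℝ) r) (closedBall 0 δ) (2 * (r / δ) + 3) := by
  set N := ⌈r / δ⌉₊
  have hN : (N : ℝ) ≤ r / δ + 1 := (Nat.ceil_lt_add_one (div_nonneg hr hδ.le)).le
  refine ⟨(Finset.Icc (-(N : ℤ)) N).image fun k : ℤ => (k : ℝ) * δ, ?_, ?_⟩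
  · calc (((Finset.Icc (-(N : ℤ)) N).image fun k : ℤ => (k : ℝ) * δ).card : ℝ)
        ≤ (Finset.Icc (-(N : ℤ)) N).card := by exact_mod_cast Finset.card_image_le
      _ = 2 * N + 1 := by rw [Int.card_Icc]; norm_cast; omega
      _ ≤ 2 * (r / δ) + 3 := by linarith
  · intro x hx
    have hxr := abs_le.1 (mem_closedBall_zero_iff.1 hx)
    have hrN : r / δ ≤ N := Nat.le_ceil _
    have hhi : (⌊x / δ⌋ : ℝ) ≤ x / δ := Int.floor_le _
    have hxδ : -(r / δ) ≤ x / δ ∧ x / δ ≤ r / δ :=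
      ⟨by rw [← neg_div]; exact div_le_div_of_nonneg_right hxr.1 hδ.le,
        div_le_div_of_nonneg_right hxr.2 hδ.le⟩
    refine mem_iUnion₂.2 ⟨⌊x / δ⌋ * δ, Finset.mem_image_of_mem _ (Finset.mem_Icc.2 ⟨?_, ?_⟩), ?_⟩
    · exact Int.le_floor.2 (by push_cast; linarith)
    · exact_mod_cast hhi.trans (hxδ.2.trans hrN)
    · rw [mem_vadd_set_iff_neg_vadd_mem, vadd_eq_add, mem_closedBall_zero_iff, Real.norm_eq_abs,
        abs_le]
      have hlo := Int.lt_floor_add_one (x / δ)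
      rw [div_lt_iff₀ hδ, add_one_mul] at hlo
      rw [le_div_iff₀ hδ] at hhi
      constructor <;> linarith

theorem coveredByTranslates_closedBall_pi (n : ℕ) {r δ : ℝ} (hr : 0 ≤ r) (hδ : 0 < δ) :
    CoveredByTranslates (closedBall (0 : Fin n → ℝ) r) (closedBall 0 δ)
      ((2 * (r / δ) + 3) ^ n) := by
  have h := CoveredByTranslates.pi fun _ : Fin n => Real.coveredByTranslates_closedBall hr hδ
  simpa only [closedBall_pi _ hr, closedBall_pi _ hδ.le, Pi.zero_apply, Finset.prod_const,
    Finset.card_univ, Fintype.card_fin] using h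

theorem exists_coveredByTranslates_closedBall (F : Type*) [NormedAddCommGroup F]
    [NormedSpace ℝ F] [FiniteDimensional ℝ F] :
    ∃ κ > 0, ∀ r ε : ℝ, 0 ≤ r → 0 < ε →
      CoveredByTranslates (closedBall (0 : F) r) (closedBall 0 ε)
        ((κ * (r / ε + 1)) ^ finrank ℝ F) := by
  classical
  set n := finrank ℝ F
  let e : F ≃L[ℝ] (Fin n → ℝ) := ContinuousLinearEquiv.ofFinrankEq (finrank_fin_fun ℝ).symm
  set a := ‖(e : F →L[ℝ] Fin n → ℝ)‖
  set b := ‖(e.symm : (Fin n → ℝ) →L[ℝ] F)‖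
  refine ⟨2 * a * (b + 1) + 3, by positivity, fun r ε hr hε => ?_⟩
  have hδ : 0 < ε / (b + 1) := by positivity
  obtain ⟨S, hS, hcov⟩ := coveredByTranslates_closedBall_pi n (by positivity : 0 ≤ a * r) hδ
  refine ⟨S.image e.symm, ?_, ?_⟩
  · have hbase : 2 * (a * r / (ε / (b + 1))) + 3 ≤ (2 * a * (b + 1) + 3) * (r / ε + 1) := by
      have : 2 * (a * r / (ε / (b + 1))) = 2 * a * (b + 1) * (r / ε) := by field_simp
      rw [this]
      nlinarith [div_nonneg hr hε.le, (by positivity : 0 ≤ 2 * a * (b + 1))]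
    calc ((S.image e.symm).card : ℝ) ≤ S.card := by exact_mod_cast Finset.card_image_le
      _ ≤ _ := hS
      _ ≤ _ := pow_le_pow_left₀ (by positivity) hbase n
  · intro v hv
    have hx : e v ∈ closedBall 0 (a * r) :=
      mem_closedBall_zero_iff.2 <| (e : F →L[ℝ] Fin n → ℝ).le_opNorm_of_le
        (mem_closedBall_zero_iff.1 hv)
    obtain ⟨g, hg, hxg⟩ := mem_iUnion₂.1 (hcov hx)
    refine mem_iUnion₂.2 ⟨_, Finset.mem_image_of_mem _ hg, ?_⟩
    rw [mem_vadd_set_iff_neg_vadd_mem, vadd_eq_add, mem_closedBall_zero_iff] at hxg ⊢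
    have hdiff : -e.symm g + v = e.symm (-g + e v) := by simp
    calc ‖-e.symm g + v‖ ≤ b * ‖-g + e v‖ :=
          hdiff ▸ (e.symm : (Fin n → ℝ) →L[ℝ] F).le_opNorm _
      _ ≤ (b + 1) * (ε / (b + 1)) := by gcongr; linarith
      _ = ε := mul_div_cancel₀ ε (by positivity)

theorem Submodule.exists_coveredByTranslates_inter_closedBall {E : Type*} [NormedAddCommGroup E]
    [NormedSpace ℝ E] (V : Submodule ℝ E) [FiniteDimensional ℝ V] :
    ∃ κ > 0, ∀ r ε : ℝ, 0 ≤ r → 0 < ε →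
      CoveredByTranslates ((V : Set E) ∩ closedBall 0 r) (V ∩ closedBall 0 ε)
        ((κ * (r / ε + 1)) ^ finrank ℝ V) := by
  classical
  obtain ⟨κ, hκ, hnet⟩ := exists_coveredByTranslates_closedBall V
  refine ⟨κ, hκ, fun r ε hr hε => ?_⟩
  obtain ⟨S, hS, hcov⟩ := hnet r ε hr hε
  refine ⟨S.image (↑), le_trans (by exact_mod_cast Finset.card_image_le) hS, ?_⟩
  rintro v ⟨hv, hvr⟩
  obtain ⟨c, hc, y, hy, hyv⟩ :=
    mem_iUnion₂.1 (hcov (a := (⟨v, hv⟩ : V)) (by simpa using hvr))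
  exact mem_iUnion₂.2 ⟨c, Finset.mem_image_of_mem _ hc, y, ⟨y.2, by simpa using hy⟩,
    congrArg Subtype.val hyv⟩

theorem Submodule.exists_inter_closedBall_subset_add {E : Type*} [NormedAddCommGroup E]
    [NormedSpace ℝ E] {V U : Submodule ℝ E} [FiniteDimensional ℝ U] (hVU : V ≤ U) :
    ∃ W : Submodule ℝ E, finrank ℝ V + finrank ℝ W = finrank ℝ U ∧ ∃ K ≥ 0, ∀ r : ℝ,
      (U : Set E) ∩ closedBall 0 r ⊆
        ((V : Set E) ∩ closedBall 0 (K * r)) + ((W : Set E) ∩ closedBall 0 (K * r)) := by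
  obtain ⟨W', hW'⟩ := (V.comap U.subtype).exists_isCompl
  let πV := LinearMap.toContinuousLinearMap ((V.comap U.subtype).projection W' hW')
  let πW := LinearMap.toContinuousLinearMap (W'.projection (V.comap U.subtype) hW'.symm)
  refine ⟨W'.map U.subtype, ?_, max ‖πV‖ ‖πW‖, le_max_of_le_left πV.opNorm_nonneg, ?_⟩
  · rw [Submodule.finrank_map_subtype_eq, ← (Submodule.comapSubtypeEquivOfLe hVU).finrank_eq]
    exact Submodule.finrank_add_eq_of_isCompl hW'
  · rintro r u ⟨hu, hur⟩
    set x : U := ⟨u, hu⟩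
    have hr : ‖x‖ ≤ r := mem_closedBall_zero_iff.1 hur
    have hbound (π : U →L[ℝ] U) (hπ : ‖π‖ ≤ max ‖πV‖ ‖πW‖) :
        ((π x : U) : E) ∈ closedBall 0 (max ‖πV‖ ‖πW‖ * r) :=
      mem_closedBall_zero_iff.2 <| (π.le_opNorm_of_le hr).trans <|
        mul_le_mul_of_nonneg_right hπ ((norm_nonneg _).trans hr)
    refine ⟨_, ⟨Submodule.projection_apply_mem hW' x, hbound πV (le_max_left _ _)⟩, _,
      ⟨Submodule.mem_map_of_mem (Submodule.projection_apply_mem hW'.symm x),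
        hbound πW (le_max_right _ _)⟩, ?_⟩
    exact congrArg Subtype.val (Submodule.projection_add_projection_eq_self hW' x)

section SpanLift

variable {d : ℕ} {A B : AffineSubspace ℝ (Fin d → ℝ)}

theorem lift1_mem_spanLift {w : Fin d → ℝ} (hw : w ∈ B) : lift1 w ∈ spanLift B :=
  Submodule.subset_span ⟨w, hw, rfl⟩

theorem spanLift_mono (h : B ≤ A) : spanLift B ≤ spanLift A :=
  Submodule.span_mono (image_mono h)

theorem finrank_spanLift (hB : (B : Set (Fin d → ℝ)).Nonempty) :
    finrank ℝ (spanLift B) = finrank ℝ B.direction + 1 := by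
  obtain ⟨w₀, hw₀⟩ := hB
  let V := B.direction
  -- `(t, u) ↦ (t, t • w₀ + u)` identifies `ℝ × B.direction` with `spanLift B`
  let L : ℝ × V →ₗ[ℝ] Fin (d + 1) → ℝ := (Fin.consLinearEquiv ℝ fun _ => ℝ).toLinearMap ∘ₗ
    (LinearMap.fst ℝ ℝ V).prod
      ((LinearMap.fst ℝ ℝ V).smulRight w₀ + V.subtype ∘ₗ LinearMap.snd ℝ ℝ V)
  have hL (p : ℝ × V) : L p = Fin.cons p.1 (p.1 • w₀ + (p.2 : Fin d → ℝ)) := rfl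
  have hinj : Function.Injective L := by
    refine (injective_iff_map_eq_zero L).2 fun ⟨t, u⟩ h => ?_
    obtain ⟨rfl, hu⟩ := Matrix.cons_eq_zero_iff.1 ((hL _).symm.trans h)
    simpa using hu
  have hrange : LinearMap.range L = spanLift B := by
    refine le_antisymm ?_ (Submodule.span_le.2 ?_)
    · rintro _ ⟨⟨t, u⟩, rfl⟩
      have hsplit : L (t, u) = t • lift1 w₀ + (lift1 ((u : Fin d → ℝ) +ᵥ w₀) - lift1 w₀) := by
        rw [hL]
        ext i
        refine Fin.cases ?_ (fun j => ?_) i <;> simp [lift1, vadd_eq_add]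
      rw [hsplit]
      exact add_mem (Submodule.smul_mem _ _ (lift1_mem_spanLift hw₀))
        (sub_mem (lift1_mem_spanLift (AffineSubspace.vadd_mem_of_mem_direction u.2 hw₀))
          (lift1_mem_spanLift hw₀))
    · rintro _ ⟨w, hw, rfl⟩
      refine ⟨(1, ⟨w -ᵥ w₀, AffineSubspace.vsub_mem_direction hw hw₀⟩), ?_⟩
      rw [hL]
      simp [lift1]
  rw [← hrange, LinearMap.finrank_range_of_inj hinj, Module.finrank_prod, Module.finrank_self,
    add_comm]

end SpanLift

section Sets

variable {d : ℕ} {A B : AffineSubspace ℝ (Fin d → ℝ)}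

theorem piSet_subset_add_closedBall {φ : ℝ → ℝ} {R T : ℝ} (hR : 1 ≤ R) (hT : 0 ≤ T) :
    PiSet A φ R T ⊆ ((spanLift A : Set (Fin (d + 1) → ℝ)) ∩ closedBall 0 (R * T + φ (R * T))) +
      closedBall 0 (φ (R * T)) := by
  rintro y ⟨hy0, hyT, hyj, hyA⟩
  have hy : ‖y‖ ≤ R * T := by
    refine (pi_norm_le_iff_of_nonneg (by nlinarith)).2 fun i => Fin.cases ?_ (fun j => hyj j) i
    rw [Real.norm_eq_abs, abs_of_nonneg hy0]
    nlinarith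
  obtain ⟨u, hu, hdist⟩ := (spanLift A).closed_of_finiteDimensional.exists_infDist_eq_dist
    ⟨0, zero_mem _⟩ y
  have hyu : ‖y - u‖ ≤ φ (R * T) := by rwa [← dist_eq_norm, ← hdist]
  refine ⟨u, ⟨hu, mem_closedBall_zero_iff.2 ?_⟩, y - u, mem_closedBall_zero_iff.2 hyu,
    add_sub_cancel _ _⟩
  calc ‖u‖ = ‖y - (y - u)‖ := by rw [sub_sub_cancel]
    _ ≤ ‖y‖ + ‖y - u‖ := norm_sub_le _ _
    _ ≤ R * T + φ (R * T) := add_le_add hy hyu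

theorem two_smul_add_mem_omegaSet {ψ : ℝ → ℝ} {R T γ t : ℝ} {β₀ s x : Fin (d + 1) → ℝ}
    (hβ₀ : β₀ ∈ spanLift B) (hβ₀0 : β₀ 0 = 1) (hR : 1 ≤ R) (ht : 2 * t * (1 + ‖β₀‖) ≤ T)
    (hx : x ∈ spanLift B) (hs : ‖s‖ ≤ t) (hsx : 2 * ‖s - x‖ ≤ γ * ψ (R * T)) :
    (2 : ℝ) • (s + t • β₀) ∈ OmegaSet B ψ R T γ := by
  have ht0 : 0 ≤ t := (norm_nonneg s).trans hs
  have hβ₀1 : 1 ≤ ‖β₀‖ := by simpa [hβ₀0] using norm_le_pi_norm β₀ 0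
  have hcoord (i : Fin (d + 1)) : |s i| ≤ t :=
    (by simpa using norm_le_pi_norm s i : |s i| ≤ ‖s‖).trans hs
  have hs0 := abs_le.1 (hcoord 0)
  refine ⟨?_, ?_, fun j => ?_, ?_⟩
  · simp only [Pi.smul_apply, Pi.add_apply, hβ₀0, smul_eq_mul]
    linarith
  · simp only [Pi.smul_apply, Pi.add_apply, hβ₀0, smul_eq_mul]
    nlinarith
  · have hβj : |β₀ j.succ| ≤ ‖β₀‖ := by simpa using norm_le_pi_norm β₀ j.succ
    calc |((2 : ℝ) • (s + t • β₀)) j.succ| = 2 * |s j.succ + t * β₀ j.succ| := by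
          simp [abs_mul]
      _ ≤ 2 * (t + t * ‖β₀‖) := by
          gcongr
          refine (abs_add_le _ _).trans (add_le_add (hcoord _) ?_)
          rw [abs_mul, abs_of_nonneg ht0]
          gcongr
      _ ≤ R * T := by nlinarith [mul_nonneg (sub_nonneg.2 hR) (show 0 ≤ T by nlinarith)]
  · have hmem : (2 : ℝ) • (x + t • β₀) ∈ spanLift B :=
      Submodule.smul_mem _ _ (add_mem hx (Submodule.smul_mem _ _ hβ₀))
    calc infDist ((2 : ℝ) • (s + t • β₀)) (spanLift B : Set (Fin (d + 1) → ℝ))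
        ≤ dist ((2 : ℝ) • (s + t • β₀)) ((2 : ℝ) • (x + t • β₀)) := infDist_le_dist_of_mem hmem
      _ = 2 * ‖s - x‖ := by
          rw [dist_eq_norm, ← smul_sub, add_sub_add_right_eq_sub, norm_smul]
          norm_num
      _ ≤ γ * ψ (R * T) := hsx

theorem add_closedBall_subset_vadd_half_omegaSet {ψ : ℝ → ℝ} {R T γ t δ ε : ℝ}
    {β₀ : Fin (d + 1) → ℝ} (hβ₀ : β₀ ∈ spanLift B) (hβ₀0 : β₀ 0 = 1) (hR : 1 ≤ R)
    (ht : 2 * t * (1 + ‖β₀‖) ≤ T) (hδε : δ + 2 * ε ≤ t) (hεγ : 4 * ε ≤ γ * ψ (R * T)) :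
    ((spanLift B : Set (Fin (d + 1) → ℝ)) ∩ closedBall 0 δ) + closedBall 0 ε + closedBall 0 ε ⊆
      (-t • β₀) +ᵥ ((1 / 2 : ℝ) • OmegaSet B ψ R T γ) := by
  rintro _ ⟨_, ⟨x, ⟨hx, hxδ⟩, e₁, he₁, rfl⟩, e₂, he₂, rfl⟩
  rw [mem_closedBall_zero_iff] at hxδ he₁ he₂
  have hs : ‖x + e₁ + e₂‖ ≤ t := (norm_add₃_le).trans (by linarith)
  have hsx : 2 * ‖x + e₁ + e₂ - x‖ ≤ γ * ψ (R * T) := by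
    rw [add_assoc, add_sub_cancel_left]
    linarith [norm_add_le e₁ e₂]
  refine ⟨_, Set.smul_mem_smul_set (two_smul_add_mem_omegaSet hβ₀ hβ₀0 hR ht hx hs hsx), ?_⟩
  simp only [vadd_eq_add, smul_smul]
  norm_num

theorem coveredByTranslates_piSet {ψ φ : ℝ → ℝ} {R T γ t δ ε η NB NW NE : ℝ}
    {β₀ : Fin (d + 1) → ℝ} {X Y : Set (Fin (d + 1) → ℝ)}
    (hβ₀ : β₀ ∈ spanLift B) (hβ₀0 : β₀ 0 = 1) (hR : 1 ≤ R) (hT : 0 ≤ T)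
    (ht : 2 * t * (1 + ‖β₀‖) ≤ T) (hδε : δ + 2 * ε ≤ t) (hεγ : 4 * ε ≤ γ * ψ (R * T))
    (hφη : φ (R * T) ≤ η)
    (hXY : (spanLift A : Set (Fin (d + 1) → ℝ)) ∩ closedBall 0 (R * T + η) ⊆ X + Y)
    (hX : CoveredByTranslates X ((spanLift B : Set (Fin (d + 1) → ℝ)) ∩ closedBall 0 δ) NB)
    (hY : CoveredByTranslates Y (closedBall 0 ε) NW)
    (hη : CoveredByTranslates (closedBall (0 : Fin (d + 1) → ℝ) η) (closedBall 0 ε) NE) :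
    CoveredByTranslates (PiSet A φ R T) ((1 / 2 : ℝ) • OmegaSet B ψ R T γ) (NB * NW * NE) := by
  refine (((hX.add hY).add hη).mono ?_ subset_rfl le_rfl).of_subset_vadd _
    (add_closedBall_subset_vadd_half_omegaSet hβ₀ hβ₀0 hR ht hδε hεγ)
  exact (piSet_subset_add_closedBall hR hT).trans <| add_subset_add
    ((inter_subset_inter_right _ (closedBall_subset_closedBall (by linarith))).trans hXY)
    (closedBall_subset_closedBall hφη)

end Sets

theorem pi_covered_by_half_omega_translates_general
    (d a b : ℕ) (R : ℝ) (hR : 1 ≤ R) (γ : ℝ) (hγ : 0 < γ)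
    (ψ φ : ℝ → ℝ)
    (hψpos : ∀ T, 1 ≤ T → 0 < ψ T)
    (hψanti : ∀ T₁ T₂, 1 ≤ T₁ → T₁ ≤ T₂ → ψ T₂ ≤ ψ T₁)
    (hφψ : ∀ T, 1 ≤ T → φ T ≤ ψ T)
    (A B : AffineSubspace ℝ (Fin d → ℝ)) (hBA : B ≤ A)
    (hBne : (B : Set (Fin d → ℝ)).Nonempty)
    (hb : Module.finrank ℝ B.direction = b)
    (ha : Module.finrank ℝ A.direction = a) :
    ∃ C > (0:ℝ), ∀ T : ℝ, 1 ≤ T →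
      ∃ S : Finset (Fin (d+1) → ℝ),
        (S.card : ℝ) ≤ C * (T / ψ (R * T)) ^ (a - b) ∧
        PiSet A φ R T ⊆
          ⋃ c ∈ S, {y | ∃ z ∈ OmegaSet B ψ R T γ, y = (1/2 : ℝ) • z + c} := by
  obtain ⟨w₀, hw₀⟩ := hBne
  set β₀ := lift1 w₀
  obtain ⟨W, hW, K, hK, hdecomp⟩ :=
    Submodule.exists_inter_closedBall_subset_add (spanLift_mono hBA)
  rw [finrank_spanLift ⟨w₀, hw₀⟩, finrank_spanLift ⟨w₀, hBA hw₀⟩, hb, ha] at hW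
  obtain ⟨κB, hκB, hnetB⟩ := (spanLift B).exists_coveredByTranslates_inter_closedBall
  obtain ⟨κW, hκW, hnetW⟩ := W.exists_coveredByTranslates_inter_closedBall
  obtain ⟨κE, hκE, hnetE⟩ := exists_coveredByTranslates_closedBall (Fin (d + 1) → ℝ)
  have hψ1 := hψpos 1 le_rfl
  -- net meshes: `m * T` along `spanLift B`, `c * ψ (R * T)` transversally to it
  set m := (6 * (1 + ‖β₀‖))⁻¹
  set c := min (γ / 4) (m / ψ 1)
  have hc : 0 < c := lt_min (by positivity) (by positivity)
  set ρ := K * (R + ψ 1)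
  refine ⟨(κB * (ρ / m + 1)) ^ finrank ℝ (spanLift B) * (κW * (ρ / c + ψ 1)) ^ (a - b) *
    (κE * (c⁻¹ + 1)) ^ (d + 1), by positivity, fun T hT => ?_⟩
  have hT0 : 0 < T := by linarith
  have hRT : 1 ≤ R * T := one_le_mul_of_one_le_of_one_le hR hT
  set Ψ := ψ (R * T)
  have hΨ : 0 < Ψ := hψpos _ hRT
  have hΨ1 : Ψ ≤ ψ 1 := hψanti 1 _ le_rfl hRT
  have hρ : K * (R * T + Ψ) ≤ ρ * T := by
    rw [mul_assoc]
    gcongr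
    linarith [le_mul_of_one_le_right hψ1.le hT]
  have hcΨ : c * Ψ ≤ m * T :=
    calc c * Ψ ≤ m / ψ 1 * ψ 1 := mul_le_mul (min_le_right _ _) hΨ1 hΨ.le (by positivity)
      _ = m := div_mul_cancel₀ _ hψ1.ne'
      _ ≤ m * T := le_mul_of_one_le_right (by positivity) hT
  obtain ⟨S, hS, hPi⟩ := coveredByTranslates_piSet (γ := γ) (t := 3 * m * T)
    (lift1_mem_spanLift hw₀) rfl hR hT0.le (le_of_eq (by simp only [m]; field_simp; ring))
    (by linarith) (by nlinarith [min_le_left (γ / 4) (m / ψ 1)]) (hφψ _ hRT) (hdecomp _)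
    (hnetB _ (m * T) (by positivity) (by positivity))
    ((hnetW _ (c * Ψ) (by positivity) (by positivity)).mono subset_rfl inter_subset_right le_rfl)
    (hnetE Ψ (c * Ψ) hΨ.le (by positivity))
  refine ⟨S, hS.trans ?_, hPi.trans (iUnion₂_mono fun c _ => ?_)⟩
  · rw [div_mul_cancel_right₀ hΨ.ne', finrank_fin_fun, show finrank ℝ W = a - b by omega]
    have hT1 : 1 ≤ ψ 1 * (T / Ψ) := by
      rw [mul_div_assoc', le_div_iff₀ hΨ]
      nlinarith
    calc _ ≤ (κB * (ρ / m + 1)) ^ finrank ℝ (spanLift B) *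
          (κW * (ρ / c + ψ 1) * (T / Ψ)) ^ (a - b) * (κE * (c⁻¹ + 1)) ^ (d + 1) := by
          rw [mul_assoc κW]
          gcongr (κB * (?_ + 1)) ^ _ * (κW * ?_) ^ _ * _
          · rw [← mul_div_mul_right ρ m hT0.ne']
            exact div_le_div_of_nonneg_right hρ (by positivity)
          · calc _ ≤ ρ * T / (c * Ψ) + ψ 1 * (T / Ψ) :=
                  add_le_add (div_le_div_of_nonneg_right hρ (by positivity)) hT1
              _ = _ := by rw [mul_div_mul_comm]; ring
      _ = _ := by rw [mul_pow (κW * (ρ / c + ψ 1))]; ring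
  · rintro _ ⟨_, ⟨z, hz, rfl⟩, rfl⟩
    exact ⟨z, hz, add_comm _ _⟩

theorem pi_covered_by_half_omega_translates
    (d a b : ℕ) (hd : 1 ≤ d) (R : ℝ) (hR : 1 ≤ R) (γ : ℝ) (hγ : 0 < γ)
    (ψ φ : ℝ → ℝ)
    (hψpos : ∀ T, 1 ≤ T → 0 < ψ T) (hφpos : ∀ T, 1 ≤ T → 0 < φ T)
    (hψanti : ∀ T₁ T₂, 1 ≤ T₁ → T₁ ≤ T₂ → ψ T₂ ≤ ψ T₁)
    (hφanti : ∀ T₁ T₂, 1 ≤ T₁ → T₁ ≤ T₂ → φ T₂ ≤ φ T₁)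
    (hφψ : ∀ T, 1 ≤ T → φ T ≤ ψ T)
    (A B : AffineSubspace ℝ (Fin d → ℝ)) (hBA : B ≤ A)
    (hBne : (B : Set (Fin d → ℝ)).Nonempty)
    (hb : Module.finrank ℝ B.direction = b)
    (ha : Module.finrank ℝ A.direction = a)
    (hba : b < a) (had : a ≤ d) :
    ∃ C > (0:ℝ), ∀ T : ℝ, 1 ≤ T →
      ∃ S : Finset (Fin (d+1) → ℝ),
        (S.card : ℝ) ≤ C * (T / ψ (R * T)) ^ (a - b) ∧
        PiSet A φ R T ⊆
          ⋃ c ∈ S, {y | ∃ z ∈ OmegaSet B ψ R T γ, y = (1/2 : ℝ) • z + c} :=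
  pi_covered_by_half_omega_translates_general d a b R hR γ hγ ψ φ hψpos hψanti hφψ A B hBA hBne hb
    ha
end

section
/- Let d ≥ 1, let a be an integer with 1 ≤ a ≤ d, let R ≥ 1 and Δ > 1/a. Define ψ(T) = T^{−1/d} and φ(T) = T^{−1/d}·(log T)^{−Δ} for T ≥ 2. Then the series ∑_{T=2}^{∞} (T/ψ(RT))^{a} · [ (φ(RT)/T)^a − (φ(R(T+1))/(T+1))^a ] converges, i.e. ∑_{T=2}^{∞} T^{a(1+1/d)} R^{a/d} · [ ((RT)^{−1/d}(log(RT))^{−Δ}/T)^a − ((R(T+1))^{−1/d}(log(R(T+1)))^{−Δ}/(T+1))^a ] < ∞. -/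
/-!
Put `s = aΔ > 1` and `p = a(1 + 1/d) ≥ 1`. The `T`-th term equals `g T - c T * g (T + 1)` with
`g T = log (R(T + 2))^(-s)` and `c T = ((T + 2)/(T + 3))^p`. Split it as
`(g T - g (T + 1)) + (1 - c T) * g (T + 1)`: the first part telescopes because `g` decreases and
stays nonnegative, and Bernoulli's inequality gives `1 - c T ≤ p/(T + 3)`, so the second part is
dominated by the Bertrand series `∑ 1/(n (log n)^s)`, which converges by Cauchy condensation.
-/

open Real

theorem summable_sub_succ_of_antitone {h : ℕ → ℝ} {c : ℝ} (hh : Antitone h) (hc : ∀ n, c ≤ h n) :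
    Summable fun n => h n - h (n + 1) := by
  refine summable_of_sum_range_le (c := h 0 - c) (fun n => sub_nonneg.2 (hh n.le_succ))
    fun n => ?_
  rw [Finset.sum_range_sub']
  linarith [hc n]

theorem summable_sub_mul_succ_of_antitone {g c : ℕ → ℝ} {b : ℝ} (hg : Antitone g)
    (hb : ∀ n, b ≤ g n) (hc : Summable fun n => (1 - c n) * g (n + 1)) :
    Summable fun n => g n - c n * g (n + 1) :=
  ((summable_sub_succ_of_antitone hg hb).add hc).congr fun n => by ring

theorem Real.summable_one_div_nat_mul_log_rpow {s : ℝ} (hs : 1 < s) :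
    Summable fun n : ℕ => 1 / (n * log n ^ s) := by
  have hnonneg (n : ℕ) : 0 ≤ 1 / ((n : ℝ) * log n ^ s) := by
    have := Real.log_natCast_nonneg n
    positivity
  have hanti : ∀ᶠ n : ℕ in Filter.atTop,
      1 / (((n + 1 : ℕ) : ℝ) * log (n + 1 : ℕ) ^ s) ≤ 1 / (n * log n ^ s) := by
    filter_upwards [Filter.eventually_ge_atTop 2] with n hn
    have hn' : (2 : ℝ) ≤ n := by exact_mod_cast hn
    have hlog : 0 < log n := Real.log_pos (by linarith)
    apply one_div_le_one_div_of_le (by positivity)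
    push_cast
    gcongr <;> linarith
  rw [← summable_condensed_iff_of_eventually_nonneg (Filter.Eventually.of_forall hnonneg) hanti]
  have hcondensed (k : ℕ) : (2 : ℝ) ^ k * (1 / (((2 ^ k : ℕ) : ℝ) * log (2 ^ k : ℕ) ^ s)) =
      (log 2 ^ s)⁻¹ * ((k : ℝ) ^ s)⁻¹ := by
    push_cast
    rw [Real.log_pow, Real.mul_rpow (Nat.cast_nonneg k) (Real.log_nonneg one_le_two)]
    field_simp
  simp_rw [hcondensed]
  exact (Real.summable_nat_rpow_inv.2 hs).mul_left _

theorem one_sub_rpow_le_mul {t p : ℝ} (ht : t ≤ 1) (hp : 1 ≤ p) : 1 - (1 - t) ^ p ≤ p * t := by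
  have := one_add_mul_self_le_rpow_one_add (s := -t) (by linarith) hp
  rw [← sub_eq_add_neg] at this
  linarith

theorem div_pow_mul_sub_eq {K : Type*} [Field K] (a : ℕ) {X ψx : K} (hX : X ≠ 0) (hψ : ψx ≠ 0)
    (Y ψy u v : K) :
    (X / ψx) ^ a * ((ψx * u / X) ^ a - (ψy * v / Y) ^ a) =
      u ^ a - (X / Y * (ψy / ψx)) ^ a * v ^ a := by
  rw [mul_sub, ← mul_pow, ← mul_pow, ← mul_pow]
  congr 2
  · field_simp
  · ring

theorem mul_rpow_neg_div_mul_rpow_neg {R X Y : ℝ} (hR : 0 < R) (hX : 0 < X) (hY : 0 < Y)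
    (e : ℝ) :
    (R * Y) ^ (-e) / (R * X) ^ (-e) = (X / Y) ^ e := by
  rw [← Real.div_rpow (by positivity) (by positivity), mul_div_mul_left _ _ hR.ne',
    Real.rpow_neg (by positivity), ← Real.inv_rpow (by positivity), inv_div]

theorem antitone_log_rpow_neg {R s : ℝ} (hR : 1 ≤ R) (hs : 0 ≤ s) :
    Antitone fun n : ℕ => log (R * (n + 2)) ^ (-s) := by
  refine antitone_nat_of_succ_le fun n => ?_
  have hlog : 0 < log (R * (n + 2)) := Real.log_pos (by nlinarith [(n.cast_nonneg : (0:ℝ) ≤ n)])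
  push_cast
  apply Real.rpow_le_rpow_of_nonpos hlog _ (by linarith)
  gcongr
  linarith

theorem summable_one_sub_div_rpow_mul_log_rpow {R p s : ℝ} (hR : 1 ≤ R) (hp : 1 ≤ p)
    (hs : 1 < s) :
    Summable fun n : ℕ => (1 - ((n + 2) / (n + 3)) ^ p) * log (R * ((n + 1 : ℕ) + 2)) ^ (-s) := by
  have hbertrand := (summable_nat_add_iff 3).2 (Real.summable_one_div_nat_mul_log_rpow hs)
  refine Summable.of_nonneg_of_le (fun n => ?_) (fun n => ?_) (hbertrand.mul_left p)
  all_goals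
    have hn : (0 : ℝ) ≤ n := n.cast_nonneg
    have hRn : (n : ℝ) + 3 ≤ R * ((n + 1 : ℕ) + 2) := by push_cast; nlinarith
    have hcoef_nonneg : 0 ≤ 1 - (((n : ℝ) + 2) / (n + 3)) ^ p := by
      rw [sub_nonneg]
      exact Real.rpow_le_one (by positivity) ((div_le_one (by positivity)).2 (by linarith))
        (by linarith)
    have hlog_nonneg : 0 ≤ log (R * ((n + 1 : ℕ) + 2)) ^ (-s) :=
      Real.rpow_nonneg (Real.log_nonneg (by linarith)) _
  · positivity
  · have hlog : 0 < log (n + 3) := Real.log_pos (by linarith)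
    have hratio : ((n : ℝ) + 2) / (n + 3) = 1 - 1 / (n + 3) := by field_simp; ring
    have hcoef : 1 - (((n : ℝ) + 2) / (n + 3)) ^ p ≤ p * (1 / (n + 3)) := by
      rw [hratio]
      exact one_sub_rpow_le_mul (by rw [div_le_one (by positivity)]; linarith) hp
    have hlog_le : log (R * ((n + 1 : ℕ) + 2)) ^ (-s) ≤ log (n + 3) ^ (-s) :=
      Real.rpow_le_rpow_of_nonpos hlog (Real.log_le_log (by positivity) hRn) (by linarith)
    calc _ ≤ p * (1 / (n + 3)) * log (n + 3) ^ (-s) :=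
          mul_le_mul hcoef hlog_le hlog_nonneg (by positivity)
      _ = p * (1 / (((n + 3 : ℕ) : ℝ) * log (n + 3 : ℕ) ^ s)) := by
          push_cast
          rw [Real.rpow_neg hlog.le, one_div, one_div, mul_inv]
          ring

theorem div_rpow_neg_pow_mul_sub_eq {R X Y L M : ℝ} (hR : 0 < R) (hX : 0 < X) (hY : 0 < Y)
    (hL : 0 ≤ L) (hM : 0 ≤ M) (a : ℕ) (e Δ : ℝ) :
    (X / (R * X) ^ (-e)) ^ a *
        (((R * X) ^ (-e) * L ^ (-Δ) / X) ^ a - ((R * Y) ^ (-e) * M ^ (-Δ) / Y) ^ a) =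
      L ^ (-(a * Δ)) - (X / Y) ^ (a * (1 + e)) * M ^ (-(a * Δ)) := by
  have hXY : 0 < X / Y := by positivity
  have hratio : (X / Y * (X / Y) ^ e) ^ a = (X / Y) ^ (a * (1 + e)) := by
    rw [mul_comm (a : ℝ), Real.rpow_mul_natCast hXY.le, Real.rpow_add hXY, Real.rpow_one]
  rw [div_pow_mul_sub_eq a hX.ne' (Real.rpow_pos_of_pos (by positivity) _).ne',
    mul_rpow_neg_div_mul_rpow_neg hR hX hY, hratio, ← Real.rpow_mul_natCast hL,
    ← Real.rpow_mul_natCast hM, neg_mul, mul_comm Δ]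

theorem corollary_series_converges_general
    (d a : ℕ) (ha1 : 1 ≤ a)
    (R : ℝ) (hR : 1 ≤ R) (Δ : ℝ) (hΔ : 1 / (a : ℝ) < Δ) :
    Summable (fun T : ℕ =>
      (((T:ℝ)+2) / ((R * ((T:ℝ)+2)) ^ (-(1:ℝ)/d))) ^ a *
        ((((R * ((T:ℝ)+2)) ^ (-(1:ℝ)/d) * (Real.log (R * ((T:ℝ)+2))) ^ (-Δ)) / ((T:ℝ)+2)) ^ a
          - (((R * ((T:ℝ)+3)) ^ (-(1:ℝ)/d) * (Real.log (R * ((T:ℝ)+3))) ^ (-Δ)) / ((T:ℝ)+3)) ^ a)) := by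
  have ha : (1 : ℝ) ≤ a := by exact_mod_cast ha1
  have hs : 1 < a * Δ := by rwa [div_lt_iff₀ (by positivity), mul_comm] at hΔ
  have hp : (1 : ℝ) ≤ a * (1 + 1 / d) := by
    have : (0 : ℝ) ≤ 1 / d := by positivity
    nlinarith
  refine (summable_sub_mul_succ_of_antitone (antitone_log_rpow_neg hR (by linarith))
    (fun n => Real.rpow_nonneg (Real.log_nonneg ?_) _)
    (summable_one_sub_div_rpow_mul_log_rpow hR hp hs)).congr fun T => ?_
  · nlinarith [(n.cast_nonneg : (0 : ℝ) ≤ n)]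
  have hT : (0 : ℝ) ≤ T := T.cast_nonneg
  rw [neg_div, div_rpow_neg_pow_mul_sub_eq (by linarith) (by linarith) (by linarith)
    (Real.log_nonneg (by nlinarith)) (Real.log_nonneg (by nlinarith))]
  push_cast
  ring_nf

theorem corollary_series_converges
    (d a : ℕ) (hd : 1 ≤ d) (ha1 : 1 ≤ a) (had : a ≤ d)
    (R : ℝ) (hR : 1 ≤ R) (Δ : ℝ) (hΔ : 1 / (a : ℝ) < Δ) :
    Summable (fun T : ℕ =>
      (((T:ℝ)+2) / ((R * ((T:ℝ)+2)) ^ (-(1:ℝ)/d))) ^ a *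
        ((((R * ((T:ℝ)+2)) ^ (-(1:ℝ)/d) * (Real.log (R * ((T:ℝ)+2))) ^ (-Δ)) / ((T:ℝ)+2)) ^ a
          - (((R * ((T:ℝ)+3)) ^ (-(1:ℝ)/d) * (Real.log (R * ((T:ℝ)+3))) ^ (-Δ)) / ((T:ℝ)+3)) ^ a)) :=
  corollary_series_converges_general d a ha1 R hR Δ hΔ
end
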